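/- If a sorting network w of the reverse permutation in S_n is 132-avoiding, then its reversal w^rev is also a 132-avoiding sorting network. -/

import Mathlib

/-!
Let `π_j` be the product of the first `j` letters of `w` and `w₀` the reverse permutation. The
prefix of length `k` of `w.reverse` multiplies to `w₀ π_{m-k}`, which avoids 132 exactly when
`π_{m-k}` avoids 312. Every letter of a reduced word is an ascent: an adjacent transposition adds
at most one inversion, and the whole word must reach `length w` of them. Multiplying on the right
by `s_a` at an ascent can create a 312 pattern only out of a 132 pattern through the positions
`a, a + 1`, so the 312-avoidance of all `π_j` follows by induction from their 132-avoidance.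
-/

/-- The adjacent transposition `s_a` (1-indexed letter `a`) acting on positions `Fin n`. -/
def adjT (n a : ℕ) : Equiv.Perm (Fin n) :=
  if h : 1 ≤ a ∧ a < n then Equiv.swap ⟨a - 1, by omega⟩ ⟨a, h.2⟩ else 1

/-- The permutation `s_{w_1} ∘ s_{w_2} ∘ ⋯ ∘ s_{w_m}` of a word, transpositions acting on
positions composed from the left (`s_{w_1}` applied first to the identity). -/
def permOfWord (n : ℕ) (w : List ℕ) : Equiv.Perm (Fin n) :=
  (w.map (adjT n)).prod

/-- The set of inversions of a permutation. -/
def invSet {n : ℕ} (σ : Equiv.Perm (Fin n)) : Set (Fin n × Fin n) :=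
  {p | p.1 < p.2 ∧ σ p.2 < σ p.1}

/-- The number of inversions. -/
noncomputable def invNum {n : ℕ} (σ : Equiv.Perm (Fin n)) : ℕ := (invSet σ).ncard

/-- `w` is a reduced word for `σ`: letters in `[n-1]`, the product of the corresponding
adjacent transpositions is `σ`, and the length is `inv σ`. -/
def IsReducedWord (n : ℕ) (σ : Equiv.Perm (Fin n)) (w : List ℕ) : Prop :=
  (∀ a ∈ w, 1 ≤ a ∧ a < n) ∧ permOfWord n w = σ ∧ w.length = invNum σ

/-- `σ` avoids the pattern 132. -/
def Avoids132 {n : ℕ} (σ : Equiv.Perm (Fin n)) : Prop :=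
  ¬ ∃ i1 i2 i3 : Fin n, i1 < i2 ∧ i2 < i3 ∧ σ i1 < σ i3 ∧ σ i3 < σ i2

/-- `σ` avoids the pattern 312. -/
def Avoids312 {n : ℕ} (σ : Equiv.Perm (Fin n)) : Prop :=
  ¬ ∃ i1 i2 i3 : Fin n, i1 < i2 ∧ i2 < i3 ∧ σ i2 < σ i3 ∧ σ i3 < σ i1

/-- The Rothe diagram of `σ` (permutation matrix with 1s at `(σ i, i)`, 0-indexed):
cells strictly north of the 1 in their column and strictly west of the 1 in their row. -/
def rothe {n : ℕ} (σ : Equiv.Perm (Fin n)) : Set (Fin n × Fin n) :=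
  {p | p.1 < σ p.2 ∧ p.2 < σ.symm p.1}

/-- Two cells are adjacent if they share an edge. -/
def adjCell {n : ℕ} (p q : Fin n × Fin n) : Prop :=
  (p.1 = q.1 ∧ ((p.2 : ℕ) + 1 = q.2 ∨ (q.2 : ℕ) + 1 = p.2)) ∨
  (p.2 = q.2 ∧ ((p.1 : ℕ) + 1 = q.1 ∨ (q.1 : ℕ) + 1 = p.1))

/-- The connected component of the Rothe diagram containing the (0-indexed) cell `(0,0)`,
empty if `(0,0)` is not in the diagram. -/
def comp11 {n : ℕ} (σ : Equiv.Perm (Fin n)) : Set (Fin n × Fin n) :=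
  {p | ∃ h0 : 0 < n,
    Relation.ReflTransGen (fun a b => a ∈ rothe σ ∧ b ∈ rothe σ ∧ adjCell a b)
      (⟨⟨0, h0⟩, ⟨0, h0⟩⟩) p ∧
    p ∈ rothe σ ∧ ((⟨⟨0, h0⟩, ⟨0, h0⟩⟩ : Fin n × Fin n)) ∈ rothe σ}

/-- Edelman–Greene insertion of `x` into a single (strictly increasing) row:
returns the new row and the optional entry bumped into the next row. -/
def insRow (x : ℕ) : List ℕ → List ℕ × Option ℕ
  | [] => ([x], none)
  | z :: zs =>
    if z < x then
      let r := insRow x zs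
      (z :: r.1, r.2)
    else if z = x then (z :: zs, some (z + 1))
    else (x :: zs, some z)

/-- Edelman–Greene insertion of `x` into a tableau (list of rows). -/
def insTab (x : ℕ) : List (List ℕ) → List (List ℕ)
  | [] => [[x]]
  | r :: rs =>
    let p := insRow x r
    match p.2 with
    | none => p.1 :: rs
    | some y => p.1 :: insTab y rs

/-- The Edelman–Greene insertion tableau `P(w)`. -/
def Ptab (w : List ℕ) : List (List ℕ) := w.foldl (fun t x => insTab x t) []

/-- Add the label `k` to the recording tableau `q` at the unique new cell of shape `p`. -/
def recordCell (k : ℕ) : List (List ℕ) → List (List ℕ) → List (List ℕ)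
  | _, [] => []
  | [], _ :: _ => [[k]]
  | q :: qs, p :: ps =>
    if q.length < p.length then (q ++ [k]) :: qs else q :: recordCell k qs ps

/-- The Edelman–Greene recording tableau `Q(w) = EG(w)`. -/
def Qtab (w : List ℕ) : List (List ℕ) :=
  (w.foldl (fun pq x =>
      let P' := insTab x pq.1
      (P', recordCell (pq.2.flatten.length + 1) pq.2 P'))
    (([], []) : List (List ℕ) × List (List ℕ))).2

/-- A tableau is frozen if the cell in (0-indexed) row `i`, column `j` contains `i + j + 1`. -/
def Frozen (P : List (List ℕ)) : Prop :=
  ∀ i j, i < P.length → j < (P.getD i []).length → (P.getD i []).getD j 0 = i + j + 1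

/-- All rows strictly increasing. -/
def RowStrict (P : List (List ℕ)) : Prop := ∀ r ∈ P, List.Pairwise (· < ·) r

/-- All columns strictly increasing. -/
def ColStrict (P : List (List ℕ)) : Prop :=
  ∀ i j, i + 1 < P.length → j < (P.getD (i + 1) []).length →
    (P.getD i []).getD j 0 < (P.getD (i + 1) []).getD j 0

/-- Valid Young-diagram shape: nonempty rows of weakly decreasing lengths. -/
def TabShape (P : List (List ℕ)) : Prop :=
  (∀ r ∈ P, r ≠ []) ∧ ∀ i, i + 1 < P.length → (P.getD (i + 1) []).length ≤ (P.getD i []).length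

/-- The reading word: rows left to right, from the bottom row up. -/
def readingWord (P : List (List ℕ)) : List ℕ := P.reverse.flatten

/-- A standard Young tableau: valid shape, strictly increasing rows and columns, and the
entries are `1, …, N` each exactly once. -/
def IsStandard (Q : List (List ℕ)) : Prop :=
  TabShape Q ∧ RowStrict Q ∧ ColStrict Q ∧ Q.flatten.Perm (List.range' 1 Q.flatten.length)

/-- `Q` has the staircase shape `sc_n = (n-1, n-2, …, 1)`. -/
def StaircaseShape (n : ℕ) (Q : List (List ℕ)) : Prop :=
  Q.length = n - 1 ∧ ∀ i, i < n - 1 → (Q.getD i []).length = n - 1 - i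

/-- A sorting network: a reduced word of the reverse permutation in `S_n`. -/
def IsSortingNetwork (n : ℕ) (w : List ℕ) : Prop :=
  IsReducedWord n Fin.revPerm w

/-- Every intermediate permutation of the word avoids 132. -/
def Avoiding132 (n : ℕ) (w : List ℕ) : Prop :=
  ∀ k, k ≤ w.length → Avoids132 (permOfWord n (w.take k))

/-- Every intermediate permutation of the word avoids 312. -/
def Avoiding312 (n : ℕ) (w : List ℕ) : Prop :=
  ∀ k, k ≤ w.length → Avoids312 (permOfWord n (w.take k))

/-- `c` is the column word of `Q`: its `k`-th letter (1-indexed) is the (1-indexed) column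
of the entry `k` in `Q`. -/
def IsColumnWord (Q : List (List ℕ)) (c : List ℕ) : Prop :=
  c.length = Q.flatten.length ∧
  ∀ k, k < c.length → ∃ i j, i < Q.length ∧ j < (Q.getD i []).length ∧
    (Q.getD i []).getD j 0 = k + 1 ∧ c.getD k 0 = j + 1

/-- All anti-diagonals of `Q` increase downwards: `Q_{i,j} > Q_{i-1,j+1}` (1-indexed). -/
def AntiDiagDown (Q : List (List ℕ)) : Prop :=
  ∀ i j, i + 1 < Q.length → j < (Q.getD (i + 1) []).length → j + 1 < (Q.getD i []).length →
    (Q.getD i []).getD (j + 1) 0 < (Q.getD (i + 1) []).getD j 0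

open Equiv

lemma adjT_eq_swap {n a : ℕ} (ha : 1 ≤ a) (ha' : a < n) :
    adjT n a = swap ⟨a - 1, by omega⟩ ⟨a, ha'⟩ :=
  dif_pos ⟨ha, ha'⟩

lemma adjT_mul_self (n a : ℕ) : adjT n a * adjT n a = 1 := by
  unfold adjT
  split <;> simp

lemma adjT_inv (n a : ℕ) : (adjT n a)⁻¹ = adjT n a :=
  inv_eq_of_mul_eq_one_right (adjT_mul_self n a)

section PermOfWord

variable {n : ℕ}

@[simp]
lemma permOfWord_nil : permOfWord n [] = 1 := rfl

@[simp]
lemma permOfWord_cons (a : ℕ) (w : List ℕ) :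
    permOfWord n (a :: w) = adjT n a * permOfWord n w :=
  List.prod_cons

lemma permOfWord_append (u v : List ℕ) :
    permOfWord n (u ++ v) = permOfWord n u * permOfWord n v := by
  simp [permOfWord]

lemma permOfWord_reverse (w : List ℕ) : permOfWord n w.reverse = (permOfWord n w)⁻¹ := by
  simp [permOfWord, List.prod_reverse_noncomm, Function.comp_def, adjT_inv]

lemma permOfWord_take_succ (w : List ℕ) {k : ℕ} (hk : k < w.length) :
    permOfWord n (w.take (k + 1)) = permOfWord n (w.take k) * adjT n w[k] := by
  rw [List.take_succ_eq_append_getElem hk, permOfWord_append, permOfWord_cons, permOfWord_nil,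
    mul_one]

lemma permOfWord_reverse_take (w : List ℕ) (k : ℕ) :
    permOfWord n (w.reverse.take k) =
      (permOfWord n w)⁻¹ * permOfWord n (w.take (w.length - k)) := by
  rw [List.take_reverse, permOfWord_reverse, eq_inv_mul_iff_mul_eq, mul_inv_eq_iff_eq_mul,
    ← permOfWord_append, List.take_append_drop]

end PermOfWord

section Inversions

variable {n : ℕ} {σ : Perm (Fin n)} {p q : Fin n}

@[simp]
lemma invNum_one : invNum (1 : Perm (Fin n)) = 0 := by
  have hempty : invSet (1 : Perm (Fin n)) = ∅ :=
    Set.eq_empty_of_forall_notMem fun _ hp => lt_asymm hp.1 hp.2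
  rw [invNum, hempty, Set.ncard_empty]

lemma swap_lt_swap (hpq : (p : ℕ) + 1 = q) {i j : Fin n} (hij : i < j) (hne : (i, j) ≠ (p, q)) :
    swap p q i < swap p q j := by
  simp only [ne_eq, Prod.mk.injEq] at hne
  simp only [swap_apply_def]
  split_ifs <;> simp only [Fin.ext_iff, Fin.lt_def] at * <;> omega

lemma invNum_mul_swap_of_lt (hpq : (p : ℕ) + 1 = q) (h : σ p < σ q) :
    invNum (σ * swap p q) = invNum σ + 1 := by
  have hlt : p < q := by rw [Fin.lt_def]; omega
  let e : Fin n × Fin n ≃ Fin n × Fin n := (swap p q).prodCongr (swap p q)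
  have mem_image {i j : Fin n} : (i, j) ∈ e '' invSet σ ↔ swap p q i < swap p q j ∧
      σ (swap p q j) < σ (swap p q i) := by
    rw [Equiv.image_eq_preimage_symm]
    simp [e, invSet]
  have hset : invSet (σ * swap p q) = insert (p, q) (e '' invSet σ) := by
    ext ⟨i, j⟩
    rw [Set.mem_insert_iff, mem_image, Prod.mk.injEq]
    simp only [invSet, Set.mem_ofPred_eq, Perm.mul_apply]
    by_cases hij : i = p ∧ j = q
    · obtain ⟨rfl, rfl⟩ := hij
      simp [hlt, h]
    by_cases hji : i = q ∧ j = p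
    · obtain ⟨rfl, rfl⟩ := hji
      simp [hlt.not_gt, h.not_gt, hlt.ne]
    have horder : i < j ↔ swap p q i < swap p q j := by
      refine ⟨fun hij' => swap_lt_swap hpq hij' (by simpa using hij), fun hs => ?_⟩
      simpa using swap_lt_swap hpq hs (by simpa [swap_apply_eq_iff] using hji)
    simp only [hij, false_or, horder]
  have hnotMem : (p, q) ∉ e '' invSet σ := by
    rw [mem_image]
    simp [hlt.not_gt]
  rw [invNum, invNum, hset, Set.ncard_insert_of_notMem hnotMem (Set.toFinite _),
    Set.ncard_image_of_injective _ e.injective]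

lemma invNum_mul_swap_of_gt (hpq : (p : ℕ) + 1 = q) (h : σ q < σ p) :
    invNum (σ * swap p q) + 1 = invNum σ := by
  have := invNum_mul_swap_of_lt (σ := σ * swap p q) hpq (by simpa using h)
  rwa [mul_assoc, swap_mul_self, mul_one, eq_comm] at this

lemma invNum_mul_swap_le (hpq : (p : ℕ) + 1 = q) : invNum (σ * swap p q) ≤ invNum σ + 1 := by
  have hne : σ p ≠ σ q := σ.injective.ne (by rw [Ne, Fin.ext_iff]; omega)
  rcases hne.lt_or_gt with hlt | hgt
  · rw [invNum_mul_swap_of_lt hpq hlt]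
  · have := invNum_mul_swap_of_gt hpq hgt
    omega

lemma lt_of_invNum_mul_swap (hpq : (p : ℕ) + 1 = q) (h : invNum (σ * swap p q) = invNum σ + 1) :
    σ p < σ q := by
  have hne : σ q ≠ σ p := σ.injective.ne (by rw [Ne, Fin.ext_iff]; omega)
  by_contra! hle
  have := invNum_mul_swap_of_gt hpq (hle.lt_of_ne hne)
  omega

lemma invNum_mul_adjT_le (σ : Perm (Fin n)) (a : ℕ) : invNum (σ * adjT n a) ≤ invNum σ + 1 := by
  by_cases ha : 1 ≤ a ∧ a < n
  · rw [adjT_eq_swap ha.1 ha.2]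
    exact invNum_mul_swap_le (by simp only; omega)
  · simp [adjT, ha]

lemma invNum_mul_permOfWord_le (σ : Perm (Fin n)) (v : List ℕ) :
    invNum (σ * permOfWord n v) ≤ invNum σ + v.length := by
  induction v generalizing σ with
  | nil => simp
  | cons a v ih =>
    rw [permOfWord_cons, ← mul_assoc, List.length_cons]
    have := invNum_mul_adjT_le σ a
    have := ih (σ * adjT n a)
    omega

end Inversions

section Patterns

variable {n : ℕ} {σ : Perm (Fin n)} {p q : Fin n}

lemma avoids312_one : Avoids312 (1 : Perm (Fin n)) := by
  rintro ⟨i, j, k, hij, hjk, hjk', hki⟩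
  exact hki.not_gt (hij.trans hjk)

lemma avoids132_revPerm_mul_iff : Avoids132 (Fin.revPerm * σ) ↔ Avoids312 σ := by
  simp only [Avoids132, Avoids312, Perm.mul_apply, Fin.revPerm_apply, Fin.rev_lt_rev]
  exact not_congr <| exists₃_congr fun _ _ _ => and_congr_right' <| and_congr_right' and_comm

lemma Avoids312.mul_swap (h312 : Avoids312 σ) (h132 : Avoids132 σ) (hpq : (p : ℕ) + 1 = q)
    (hasc : σ p < σ q) : Avoids312 (σ * swap p q) := by
  rintro ⟨i, j, k, hij, hjk, hjk', hki⟩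
  simp only [Perm.mul_apply] at hjk' hki
  by_cases hij_pq : (i, j) = (p, q)
  · obtain ⟨rfl, rfl⟩ := Prod.mk.inj hij_pq
    rw [swap_apply_left, swap_apply_right,
      swap_apply_of_ne_of_ne (hij.trans hjk).ne' hjk.ne'] at *
    exact h132 ⟨i, j, k, hij, hjk, hjk', hki⟩
  by_cases hjk_pq : (j, k) = (p, q)
  · obtain ⟨rfl, rfl⟩ := Prod.mk.inj hjk_pq
    rw [swap_apply_left, swap_apply_right] at hjk'
    exact hasc.not_gt hjk'
  exact h312 ⟨_, _, _, swap_lt_swap hpq hij hij_pq, swap_lt_swap hpq hjk hjk_pq, hjk', hki⟩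

end Patterns

section ReducedWords

variable {n : ℕ} {σ : Perm (Fin n)} {w : List ℕ}

lemma invNum_permOfWord_le (w : List ℕ) : invNum (permOfWord n w) ≤ w.length := by
  simpa using invNum_mul_permOfWord_le 1 w

lemma IsReducedWord.invNum_take (hw : IsReducedWord n σ w) {k : ℕ} (hk : k ≤ w.length) :
    invNum (permOfWord n (w.take k)) = k := by
  obtain ⟨-, hperm, hlen⟩ := hw
  have hprefix := invNum_permOfWord_le (n := n) (w.take k)
  have hsuffix := invNum_mul_permOfWord_le (permOfWord n (w.take k)) (w.drop k)
  rw [← permOfWord_append, List.take_append_drop, hperm, ← hlen, List.length_drop] at hsuffix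
  rw [List.length_take_of_le hk] at hprefix
  omega

lemma IsReducedWord.permOfWord_take_lt (hw : IsReducedWord n σ w) {k : ℕ} (hk : k < w.length)
    (ha : 1 ≤ w[k]) (ha' : w[k] < n) :
    permOfWord n (w.take k) ⟨w[k] - 1, by omega⟩ < permOfWord n (w.take k) ⟨w[k], ha'⟩ := by
  refine lt_of_invNum_mul_swap (by simp only; omega) ?_
  rw [← adjT_eq_swap ha ha', ← permOfWord_take_succ w hk, hw.invNum_take hk, hw.invNum_take hk.le]

lemma IsReducedWord.avoiding312 (hw : IsReducedWord n σ w) (h132 : Avoiding132 n w) :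
    Avoiding312 n w := by
  intro k hk
  induction k with
  | zero => simpa using avoids312_one
  | succ k ih =>
    obtain ⟨ha, ha'⟩ := hw.1 _ (List.getElem_mem hk)
    rw [permOfWord_take_succ w hk, adjT_eq_swap ha ha']
    exact (ih (by omega)).mul_swap (h132 k (by omega)) (by simp only; omega)
      (hw.permOfWord_take_lt hk ha ha')

lemma revPerm_inv : (Fin.revPerm : Perm (Fin n))⁻¹ = Fin.revPerm :=
  Fin.revPerm_symm

lemma IsSortingNetwork.reverse (hw : IsSortingNetwork n w) : IsSortingNetwork n w.reverse := by
  obtain ⟨hletters, hperm, hlen⟩ := hw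
  exact ⟨fun a ha => hletters a (List.mem_reverse.mp ha),
    by rw [permOfWord_reverse, hperm, revPerm_inv], by rw [List.length_reverse, hlen]⟩

end ReducedWords

/-- the reversal of a 132-avoiding sorting network is again a 132-avoiding
sorting network. -/
theorem reverse_avoiding132_sn (n : ℕ) (w : List ℕ)
    (hw : IsSortingNetwork n w) (h132 : Avoiding132 n w) :
    IsSortingNetwork n w.reverse ∧ Avoiding132 n w.reverse := by
  refine ⟨hw.reverse, fun k _ => ?_⟩
  rw [permOfWord_reverse_take, hw.2.1, revPerm_inv, avoids132_revPerm_mul_iff]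
  exact IsReducedWord.avoiding312 hw h132 _ (Nat.sub_le _ _)
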